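/- arXiv:2202.03386 — 3 statements merged into one kernel-verified Lean document; each statement's English description precedes it below -/
import Mathlib

section
/- Let Γ₀ > 2√(C+1) where C is the constant in the flow estimate for φ_τ*f. Then for all τ ≥ 0, the image φ_τ({x : Γ₀/2 < f(x) < Γ₀}) is contained in {x : e^τ < f(x) < Γ₀ e^τ}. -/
/-!
Along a trajectory `g = φ_τ*f` the level `√(C+1)` is a barrier: where `g = √(C+1)` the lower
bound gives `g' ≥ 1/g > 0`. Above the barrier `g ≥ √C` holds, so both differential inequalities
are available and are linear Grönwall inequalities, for `g` and for `g² - C`: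
`g(τ) ≤ g(0) e^τ` and `g(τ)² ≥ C + (g(0)² - C) e^{2τ} > e^{2τ}`.
-/

open Set Real

theorem le_mul_exp_of_hasDerivAt_le {u u' : ℝ → ℝ} {K a b : ℝ}
    (hu : ∀ t, HasDerivAt u (u' t) t) (bound : ∀ t ∈ Ico a b, u' t ≤ K * u t) :
    ∀ t ∈ Icc a b, u t ≤ u a * exp (K * (t - a)) := by
  intro t ht
  rw [← gronwallBound_ε0]
  refine le_gronwallBound_of_liminf_deriv_right_le
    (fun s _ => (hu s).continuousAt.continuousWithinAt)
    (fun s _ _ hr => (hu s).hasDerivWithinAt.liminf_right_slope_le hr) le_rfl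
    (by simpa using bound) t ht

section SolitonFlowBounds

variable {g g' : ℝ → ℝ} {C : ℝ}

theorem sqrt_add_one_le_of_hasDerivAt (hC : 0 < C + 1) (hg : ∀ t, HasDerivAt g (g' t) t)
    (hlow : ∀ t, √C ≤ g t → g t - C / g t ≤ g' t) {a : ℝ} (ha : √(C + 1) ≤ g a) :
    ∀ t, a ≤ t → √(C + 1) ≤ g t := by
  intro t ht
  refine image_le_of_deriv_right_lt_deriv_boundary (f' := 0) continuousOn_const
    (fun _ _ => hasDerivWithinAt_const _ _ _) ha hg ?_ ⟨ht, le_rfl⟩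
  intro s _ hs
  have hpos : 0 < g s := hs ▸ sqrt_pos.2 hC
  have hbarrier : g s - C / g s = 1 / g s := by
    rw [← hs, eq_div_iff (sqrt_pos.2 hC).ne', sub_mul, div_mul_cancel₀ _ (sqrt_pos.2 hC).ne',
      ← sq, sq_sqrt hC.le]
    ring
  calc (0 : ℝ) < 1 / g s := by positivity
    _ = g s - C / g s := hbarrier.symm
    _ ≤ g' s := hlow s (hs ▸ sqrt_le_sqrt (by linarith))

theorem add_mul_exp_le_sq_of_hasDerivAt (hg : ∀ t, HasDerivAt g (g' t) t)
    (hlow : ∀ t, √C ≤ g t → g t - C / g t ≤ g' t) {a b : ℝ} (hab : a ≤ b)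
    (hge : ∀ t ∈ Ico a b, √C ≤ g t) (hpos : ∀ t ∈ Ico a b, 0 < g t) :
    C + (g a ^ 2 - C) * exp (2 * (b - a)) ≤ g b ^ 2 := by
  have hu : ∀ t, HasDerivAt (fun s => C - g s ^ 2) (-(2 * g t * g' t)) t := fun t => by
    simpa using ((hg t).pow 2).const_sub C
  have bound : ∀ t ∈ Ico a b, -(2 * g t * g' t) ≤ 2 * (C - g t ^ 2) := by
    intro t ht
    have h := mul_le_mul_of_nonneg_left (hlow t (hge t ht)) (hpos t ht).le
    rw [mul_sub, mul_div_cancel₀ _ (hpos t ht).ne'] at h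
    nlinarith
  have := le_mul_exp_of_hasDerivAt_le hu bound b ⟨hab, le_rfl⟩
  linarith

theorem exp_lt_of_hasDerivAt (hC : 0 < C) (hg : ∀ t, HasDerivAt g (g' t) t)
    (hlow : ∀ t, √C ≤ g t → g t - C / g t ≤ g' t) (h0 : √(C + 1) < g 0) {τ : ℝ} (hτ : 0 ≤ τ) :
    exp τ < g τ := by
  have hstay := sqrt_add_one_le_of_hasDerivAt (by linarith) hg hlow h0.le
  have hsqrt_pos : 0 < √(C + 1) := sqrt_pos.2 (by linarith)
  have hsq := add_mul_exp_le_sq_of_hasDerivAt hg hlow hτ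
    (fun t ht => (sqrt_le_sqrt (by linarith)).trans (hstay t ht.1))
    (fun t ht => hsqrt_pos.trans_le (hstay t ht.1))
  have h0sq : C + 1 < g 0 ^ 2 := by
    simpa [sq_sqrt (by linarith : (0 : ℝ) ≤ C + 1)] using pow_lt_pow_left₀ h0 hsqrt_pos.le two_ne_zero
  refine lt_of_pow_lt_pow_left₀ 2 (hsqrt_pos.le.trans (hstay τ hτ)) ?_
  calc exp τ ^ 2 = 1 * exp (2 * (τ - 0)) := by rw [← exp_nat_mul]; ring_nf
    _ < C + (g 0 ^ 2 - C) * exp (2 * (τ - 0)) := by nlinarith [exp_pos (2 * (τ - 0))]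
    _ ≤ g τ ^ 2 := hsq

end SolitonFlowBounds

theorem statement14_general (M : Type*) (C Γ₀ : ℝ) (hC : 0 < C)
    (hΓ : 2 * Real.sqrt (C + 1) < Γ₀)
    (f : M → ℝ) (φ : ℝ → M → M) (F D : M → ℝ → ℝ)
    (hFdef : ∀ x τ, F x τ = f (φ τ x))
    (hinit : ∀ x, φ 0 x = x)
    (hderiv : ∀ x τ, HasDerivAt (F x) (D x τ) τ)
    (hup : ∀ x τ, D x τ ≤ F x τ)
    (hlow : ∀ x τ, Real.sqrt C ≤ F x τ → F x τ - C / F x τ ≤ D x τ) :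
    ∀ τ : ℝ, 0 ≤ τ →
      φ τ '' {x | Γ₀ / 2 < f x ∧ f x < Γ₀}
        ⊆ {y | Real.exp τ < f y ∧ f y < Γ₀ * Real.exp τ} := by
  rintro τ hτ _ ⟨x, ⟨hx₁, hx₂⟩, rfl⟩
  have hF0 : F x 0 = f x := by rw [hFdef, hinit]
  rw [mem_ofPred_eq, ← hFdef]
  constructor
  · exact exp_lt_of_hasDerivAt hC (hderiv x) (hlow x) (by linarith) hτ
  · calc F x τ ≤ F x 0 * exp (1 * (τ - 0)) :=
          le_mul_exp_of_hasDerivAt_le (hderiv x) (fun t _ => by simpa using hup x t) τ ⟨hτ, le_rfl⟩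
      _ < Γ₀ * exp τ := by rw [hF0]; simpa using mul_lt_mul_of_pos_right hx₂ (exp_pos τ)

/-- Let `Γ₀ > 2√(C+1)` where `C` is the constant in the flow estimate for
`φ_τ*f`.  Then for all `τ ≥ 0`,
`φ_τ({x : Γ₀/2 < f(x) < Γ₀}) ⊆ {x : e^τ < f(x) < Γ₀ e^τ}`.
Here `φ_τ` are the soliton diffeomorphisms with `φ_0 = id`, `F x τ = f(φ_τ(x))`,
and `D x τ = ∂_τ F x τ` satisfies `∂_τ(φ_τ*f) ≤ φ_τ*f` and
`∂_τ(φ_τ*f) ≥ φ_τ*f - C/(φ_τ*f)` wherever `φ_τ*f ≥ √C`. -/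
theorem statement14 (M : Type*) (C Γ₀ : ℝ) (hC : 0 < C)
    (hΓ : 2 * Real.sqrt (C + 1) < Γ₀)
    (f : M → ℝ) (φ : ℝ → M → M) (F D : M → ℝ → ℝ)
    (hFdef : ∀ x τ, F x τ = f (φ τ x))
    (hinit : ∀ x, φ 0 x = x)
    (hpos : ∀ x τ, 0 < F x τ)
    (hderiv : ∀ x τ, HasDerivAt (F x) (D x τ) τ)
    (hup : ∀ x τ, D x τ ≤ F x τ)
    (hlow : ∀ x τ, Real.sqrt C ≤ F x τ → F x τ - C / F x τ ≤ D x τ) :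
    ∀ τ : ℝ, 0 ≤ τ →
      φ τ '' {x | Γ₀ / 2 < f x ∧ f x < Γ₀}
        ⊆ {y | Real.exp τ < f y ∧ f y < Γ₀ * Real.exp τ} :=
  statement14_general M C Γ₀ hC hΓ f φ F D hFdef hinit hderiv hup hlow
end

section
/- Let (M^n, g, f) be a shrinking gradient Ricci soliton with scalar curvature R ≥ 0, f > 0, 0 ≤ |∇f|²/f ≤ 1, and Δ_f f = n/2 - f. Fix κ > 0 and constants A, B, ω > 0 with B - A(κ(κ + n/2) + 4C_n(1+ε) sup_M(|Rm| f)) ≥ ω. Then for Γ sufficiently large (depending on n, B, κ, ω) and γ sufficiently small (depending on n, M, g, A, B, κ, ω), the function u(x,τ) = e^{-κτ}(A f(x)^κ - B f(x)^{κ-1}) satisfies the supersolution inequality ∂_τ u ≥ (1 + C_n √u)Δu - ∇_{∇f}u + 4C_n(1+ε)|Rm| u on the region {(x,τ) : Γ < f(x) < γ e^τ}. -/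
/-!
Dividing by `e^{-κτ} f^{κ-3}` turns the supersolution inequality into a polynomial one in
`F = f`, `W = |∇f|² ∈ [0, F]` and `Δf = n/2 - (F - W)`. Without the factor `C_n √u`, the margin
`ω` in the hypothesis on `A, B` leaves a gap of `(ω/2) F²` once `F ≥ Γ` absorbs the lower-order
terms, while the normalized `Δu` is at most a constant times `F²`. On `{f < γ e^τ}` one has
`u ≤ A γ^κ`, so for `γ` small the nonlinear term `C_n √u Δu` fits into that gap.
-/

section

variable {n : ℕ} {κ A B F W L : ℝ}

noncomputable def lapConst (n : ℕ) (κ A B : ℝ) : ℝ :=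
  A * κ * (κ + n / 2) + B * |κ - 1| * (n / 2 + 1 + |κ - 2|)

lemma lapConst_pos (hκ : 0 < κ) (hA : 0 < A) (hB : 0 ≤ B) : 0 < lapConst n κ A B := by
  unfold lapConst; positivity

lemma lap_le_lapConst_mul_sq (hκ : 0 ≤ κ) (hA : 0 ≤ A) (hB : 0 ≤ B) (hF : 1 ≤ F)
    (hW0 : 0 ≤ W) (hWF : W ≤ F) (hL : L = n / 2 - (F - W)) :
    A * (κ * F ^ 2 * L + κ * (κ - 1) * F * W) - B * ((κ - 1) * F * L + (κ - 1) * (κ - 2) * W)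
      ≤ lapConst n κ A B * F ^ 2 := by
  have hn : (0 : ℝ) ≤ n / 2 := by positivity
  have hLle : L ≤ n / 2 := by linarith
  have hLabs : |L| ≤ n / 2 + F := abs_le.2 ⟨by linarith, by linarith⟩
  have hW : (κ - 1) * W ≤ κ * F := by nlinarith
  have hBL : -((κ - 1) * L) ≤ |κ - 1| * (n / 2 + F) :=
    (neg_le_abs _).trans (by rw [abs_mul]; gcongr)
  have hBW : -((κ - 1) * (κ - 2)) * W ≤ |κ - 1| * |κ - 2| * F :=
    mul_le_mul (by rw [← abs_mul]; exact neg_le_abs _) hWF hW0 (by positivity)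
  have hFF : F ≤ F ^ 2 := by nlinarith
  unfold lapConst
  nlinarith [mul_le_mul_of_nonneg_left hLle (by positivity : 0 ≤ A * κ * F ^ 2),
    mul_le_mul_of_nonneg_left hW (by positivity : 0 ≤ A * κ * F),
    mul_le_mul_of_nonneg_left hBL (by positivity : 0 ≤ B * F),
    mul_le_mul_of_nonneg_left hBW hB,
    mul_le_mul_of_nonneg_left hFF (by positivity : 0 ≤ B * |κ - 1| * (n / 2 + |κ - 2|))]

lemma drift_le {c N S ω : ℝ} (hκ : 0 ≤ κ) (hA : 0 ≤ A) (hB : 0 ≤ B) (hc : 0 ≤ c)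
    (hF : 0 ≤ F) (hW0 : 0 ≤ W) (hWF : W ≤ F) (hL : L = n / 2 - (F - W))
    (hN : 0 ≤ N) (hNS : N * F ≤ S) (hAB : ω ≤ B - A * (κ * (κ + n / 2) + c * S))
    (hΓ : 2 * B * |κ - 1| * (n / 2 + |κ - 2|) ≤ ω * F) :
    A * (κ * F ^ 2 * L + κ * (κ - 1) * F * W) - B * ((κ - 1) * F * L + (κ - 1) * (κ - 2) * W)
        - (A * κ * F ^ 2 - B * (κ - 1) * F) * W + c * N * (A * F ^ 3 - B * F ^ 2)
      ≤ -κ * (A * F ^ 3 - B * F ^ 2) - ω / 2 * F ^ 2 := by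
  subst hL
  have hW : (κ - 1) * W ≤ κ * F := by nlinarith
  have hB1 : -(κ - 1) ≤ |κ - 1| := neg_le_abs _
  have hBW : -((κ - 1) * (κ - 2)) * W ≤ |κ - 1| * |κ - 2| * F :=
    mul_le_mul (by rw [← abs_mul]; exact neg_le_abs _) hWF hW0 (by positivity)
  nlinarith [mul_le_mul_of_nonneg_left hW (by positivity : 0 ≤ A * κ * F),
    mul_le_mul_of_nonneg_left hB1 (by positivity : 0 ≤ B * (n / 2) * F),
    mul_le_mul_of_nonneg_left hBW hB,
    mul_le_mul_of_nonneg_left hNS (by positivity : 0 ≤ c * A * F ^ 2),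
    mul_le_mul_of_nonneg_right hΓ hF,
    mul_le_mul_of_nonneg_right hAB (sq_nonneg F),
    mul_nonneg (mul_nonneg hc hN) (by positivity : 0 ≤ B * F ^ 2)]

lemma normalized_supersolution {c N S ω s : ℝ} (hκ : 0 ≤ κ) (hA : 0 ≤ A) (hB : 0 ≤ B)
    (hc : 0 ≤ c) (hF : 1 ≤ F) (hW0 : 0 ≤ W) (hWF : W ≤ F) (hL : L = n / 2 - (F - W))
    (hN : 0 ≤ N) (hNS : N * F ≤ S) (hAB : ω ≤ B - A * (κ * (κ + n / 2) + c * S))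
    (hΓ : 2 * B * |κ - 1| * (n / 2 + |κ - 2|) ≤ ω * F)
    (hs0 : 0 ≤ s) (hs : s * lapConst n κ A B ≤ ω / 2) :
    (1 + s) * (A * (κ * F ^ 2 * L + κ * (κ - 1) * F * W)
        - B * ((κ - 1) * F * L + (κ - 1) * (κ - 2) * W))
        - (A * κ * F ^ 2 - B * (κ - 1) * F) * W + c * N * (A * F ^ 3 - B * F ^ 2)
      ≤ -κ * (A * F ^ 3 - B * F ^ 2) := by
  have hlap := mul_le_mul_of_nonneg_left
    (lap_le_lapConst_mul_sq hκ hA hB hF hW0 hWF hL) hs0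
  have hdrift := drift_le hκ hA hB hc (by linarith) hW0 hWF hL hN hNS hAB hΓ
  linarith [mul_le_mul_of_nonneg_right hs (sq_nonneg F)]

lemma exp_neg_mul_mul_profile_le {γ τ : ℝ} (hκ : 0 ≤ κ) (hA : 0 ≤ A) (hB : 0 ≤ B)
    (hF : 0 ≤ F) (hFγ : F ≤ γ * Real.exp τ) :
    Real.exp (-κ * τ) * (A * F ^ κ - B * F ^ (κ - 1)) ≤ A * γ ^ κ := by
  have hγ : 0 ≤ γ := nonneg_of_mul_nonneg_left (hF.trans hFγ) (Real.exp_pos τ)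
  have hFκ : F ^ κ ≤ γ ^ κ * Real.exp (κ * τ) := by
    calc F ^ κ ≤ (γ * Real.exp τ) ^ κ := Real.rpow_le_rpow hF hFγ hκ
      _ = γ ^ κ * Real.exp (κ * τ) := by
        rw [Real.mul_rpow hγ (Real.exp_pos τ).le, ← Real.exp_mul, mul_comm τ]
  have hE := Real.exp_pos (-κ * τ)
  calc Real.exp (-κ * τ) * (A * F ^ κ - B * F ^ (κ - 1))
      ≤ Real.exp (-κ * τ) * (A * (γ ^ κ * Real.exp (κ * τ))) := by
        have := Real.rpow_nonneg hF (κ - 1)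
        gcongr; nlinarith
    _ = A * γ ^ κ * (Real.exp (-κ * τ) * Real.exp (κ * τ)) := by ring
    _ = A * γ ^ κ := by rw [← Real.exp_add]; simp

lemma mul_sqrt_profile_le {Cn σ γ τ : ℝ} (hCn : 0 < Cn) (hσ : 0 ≤ σ) (hκ : 0 < κ)
    (hA : 0 < A) (hB : 0 ≤ B) (hF : 0 ≤ F) (hγ : γ = ((σ / Cn) ^ 2 / A) ^ κ⁻¹)
    (hFγ : F ≤ γ * Real.exp τ) :
    Cn * √(Real.exp (-κ * τ) * (A * F ^ κ - B * F ^ (κ - 1))) ≤ σ := by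
  have hu := exp_neg_mul_mul_profile_le hκ.le hA.le hB hF hFγ
  rw [hγ, Real.rpow_inv_rpow (by positivity) hκ.ne', mul_div_cancel₀ _ hA.ne',
    ← Real.sqrt_le_left (by positivity)] at hu
  exact (le_div_iff₀' hCn).1 hu

lemma rpow_eq_rpow_sub_three_mul (hF : 0 < F) (κ : ℝ) :
    F ^ κ = F ^ (κ - 3) * F ^ 3 ∧ F ^ (κ - 1) = F ^ (κ - 3) * F ^ 2 ∧
      F ^ (κ - 2) = F ^ (κ - 3) * F := by
  have hpow : ∀ k : ℕ, F ^ (κ - 3 + k) = F ^ (κ - 3) * F ^ k :=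
    Real.rpow_add_natCast hF.ne' (κ - 3)
  refine ⟨?_, ?_, ?_⟩
  · simpa using hpow 3
  · rw [show κ - 1 = κ - 3 + (2 : ℕ) by push_cast; ring, hpow]
  · rw [show κ - 2 = κ - 3 + (1 : ℕ) by push_cast; ring, hpow, pow_one]

end

theorem statement15_general (M : Type*) (n : ℕ) (Cn ε : ℝ)
    (hCn : 0 < Cn) (hε : ε ∈ Set.Ioo (0 : ℝ) 1)
    (f R w2 lapf normRm : M → ℝ) (SRm : ℝ)
    (hw2 : ∀ x, 0 ≤ w2 x ∧ w2 x ≤ f x)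
    -- the traced soliton equation `Δf = n/2 - R` (equivalently `Δ_f f = n/2 - f`)
    (hlap : ∀ x, lapf x = (n : ℝ) / 2 - R x)
    (hfdecomp : ∀ x, R x + w2 x = f x)
    (hRm0 : ∀ x, 0 ≤ normRm x)
    -- quadratic curvature decay: `sup_M (|Rm| f) ≤ SRm`
    (hSRm : ∀ x, normRm x * f x ≤ SRm)
    (κ A B ω : ℝ) (hκ : 0 < κ) (hA : 0 < A) (hB : 0 < B) (hω : 0 < ω)
    (hAB : ω ≤ B - A * (κ * (κ + (n : ℝ) / 2) + 4 * Cn * (1 + ε) * SRm)) :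
    ∃ Γ γ : ℝ, 0 < Γ ∧ 0 < γ ∧
      ∀ (x : M) (τ : ℝ), Γ < f x → f x < γ * Real.exp τ →
        -- `∂_τ u ≥ (1 + C_n √u) Δu - ∇_{∇f} u + 4 C_n (1+ε)|Rm| u`
        (1 + Cn * Real.sqrt (Real.exp (-κ * τ) * (A * f x ^ κ - B * f x ^ (κ - 1))))
            * (Real.exp (-κ * τ) *
                (A * (κ * f x ^ (κ - 1) * lapf x
                        + κ * (κ - 1) * f x ^ (κ - 2) * w2 x)
                  - B * ((κ - 1) * f x ^ (κ - 2) * lapf x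
                        + (κ - 1) * (κ - 2) * f x ^ (κ - 3) * w2 x)))
          - Real.exp (-κ * τ) *
              (A * κ * f x ^ (κ - 1) - B * (κ - 1) * f x ^ (κ - 2)) * w2 x
          + 4 * Cn * (1 + ε) * normRm x *
              (Real.exp (-κ * τ) * (A * f x ^ κ - B * f x ^ (κ - 1)))
        ≤ -κ * (Real.exp (-κ * τ) * (A * f x ^ κ - B * f x ^ (κ - 1))) := by
  have hc : 0 ≤ 4 * Cn * (1 + ε) := by have := hε.1; positivity
  have hK := lapConst_pos (n := n) hκ hA hB.le
  set σ := ω / (2 * lapConst n κ A B)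
  refine ⟨max 1 (2 * B * |κ - 1| * (n / 2 + |κ - 2|) / ω), ((σ / Cn) ^ 2 / A) ^ κ⁻¹,
    by positivity, by positivity, fun x τ hΓ hγ => ?_⟩
  set F := f x
  have hF : 1 ≤ F := (le_max_left _ _).trans hΓ.le
  have hFΓ : 2 * B * |κ - 1| * (n / 2 + |κ - 2|) ≤ ω * F := by
    have := (le_max_right _ _).trans_lt hΓ
    rw [div_lt_iff₀ hω] at this; linarith
  have hs := mul_sqrt_profile_le hCn (by positivity) hκ hA hB.le (by linarith) rfl hγ.le
  set s := Cn * √(Real.exp (-κ * τ) * (A * F ^ κ - B * F ^ (κ - 1)))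
  have hL : lapf x = n / 2 - (F - w2 x) := by linarith [hlap x, hfdecomp x]
  have key := normalized_supersolution (s := s) hκ.le hA.le hB.le hc hF (hw2 x).1 (hw2 x).2 hL
    (hRm0 x) (hSRm x) hAB hFΓ (by positivity)
    ((mul_le_mul_of_nonneg_right hs hK.le).trans_eq (by simp only [σ]; field_simp))
  obtain ⟨h0, h1, h2⟩ := rpow_eq_rpow_sub_three_mul (by linarith : 0 < F) κ
  rw [h0, h1, h2]
  have hEP : 0 ≤ Real.exp (-κ * τ) * F ^ (κ - 3) := by positivity
  linarith [mul_le_mul_of_nonneg_left key hEP]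

/-- Let `(M^n, g, f)` be a shrinking gradient Ricci soliton with `R ≥ 0`,
`f > 0`, `0 ≤ |∇f|²/f ≤ 1`, and `Δ_f f = n/2 - f`.  Fix `κ > 0` and constants
`A, B, ω > 0` with `B - A(κ(κ + n/2) + 4C_n(1+ε) sup_M(|Rm| f)) ≥ ω`.  Then for `Γ`
sufficiently large and `γ` sufficiently small, the function
`u(x,τ) = e^{-κτ}(A f^κ - B f^{κ-1})` satisfies
`∂_τ u ≥ (1 + C_n √u) Δu - ∇_{∇f}u + 4 C_n (1+ε) |Rm| u`
on the region `{(x,τ) : Γ < f(x) < γ e^τ}`.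
Here `w2 = |∇f|²` and `lapf = Δf`; the chain-rule identities
`Δ(f^κ) = κ f^{κ-1}Δf + κ(κ-1) f^{κ-2}|∇f|²` and `⟨∇(f^κ), ∇f⟩ = κ f^{κ-1}|∇f|²`
express `Δu`, `∇_{∇f}u` and `∂_τ u = -κ u` in terms of the soliton data. -/
theorem statement15 (M : Type*) (n : ℕ) (Cn ε : ℝ)
    (hCn : 0 < Cn) (hε : ε ∈ Set.Ioo (0 : ℝ) 1)
    (f R w2 lapf normRm : M → ℝ) (SRm : ℝ)
    (hR : ∀ x, 0 ≤ R x) (hfpos : ∀ x, 0 < f x)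
    (hw2 : ∀ x, 0 ≤ w2 x ∧ w2 x ≤ f x)
    -- the traced soliton equation `Δf = n/2 - R` (equivalently `Δ_f f = n/2 - f`)
    (hlap : ∀ x, lapf x = (n : ℝ) / 2 - R x)
    (hfdecomp : ∀ x, R x + w2 x = f x)
    (hRm0 : ∀ x, 0 ≤ normRm x)
    -- quadratic curvature decay: `sup_M (|Rm| f) ≤ SRm`
    (hSRm : ∀ x, normRm x * f x ≤ SRm)
    (κ A B ω : ℝ) (hκ : 0 < κ) (hA : 0 < A) (hB : 0 < B) (hω : 0 < ω)
    (hAB : ω ≤ B - A * (κ * (κ + (n : ℝ) / 2) + 4 * Cn * (1 + ε) * SRm)) :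
    ∃ Γ γ : ℝ, 0 < Γ ∧ 0 < γ ∧
      ∀ (x : M) (τ : ℝ), Γ < f x → f x < γ * Real.exp τ →
        -- `∂_τ u ≥ (1 + C_n √u) Δu - ∇_{∇f} u + 4 C_n (1+ε)|Rm| u`
        (1 + Cn * Real.sqrt (Real.exp (-κ * τ) * (A * f x ^ κ - B * f x ^ (κ - 1))))
            * (Real.exp (-κ * τ) *
                (A * (κ * f x ^ (κ - 1) * lapf x
                        + κ * (κ - 1) * f x ^ (κ - 2) * w2 x)
                  - B * ((κ - 1) * f x ^ (κ - 2) * lapf x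
                        + (κ - 1) * (κ - 2) * f x ^ (κ - 3) * w2 x)))
          - Real.exp (-κ * τ) *
              (A * κ * f x ^ (κ - 1) - B * (κ - 1) * f x ^ (κ - 2)) * w2 x
          + 4 * Cn * (1 + ε) * normRm x *
              (Real.exp (-κ * τ) * (A * f x ^ κ - B * f x ^ (κ - 1)))
        ≤ -κ * (Real.exp (-κ * τ) * (A * f x ^ κ - B * f x ^ (κ - 1))) :=
  statement15_general M n Cn ε hCn hε f R w2 lapf normRm SRm hw2 hlap hfdecomp hRm0 hSRm κ A B ω hκ
    hA hB hω hAB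
end

section
/- Let (M^n, g, f) be a shrinking gradient Ricci soliton with R ≥ 0, f > 0, 0 ≤ |∇f|²/f ≤ 1, Δ_f f = n/2 - f, and sup_M(f|Rm|) < ∞. Let a, B, C₀ > 0 with B > 4C_n(1+ε)(sup_M f|Rm|)·a + C₀√a. Then for τ₀ sufficiently large (depending on n, M, g, f, C₀, ε, γ, a, B), the function u = a - B/f is a positive supersolution of ∂_τ u ≥ (1 + C_n√u)Δu - ∇_{∇f}u + 4C_n(1+ε)|Rm| u + (C₀/Γ)e^{-τ}√u on the region {(x,τ) : τ ≥ τ₀, γ e^τ < f(x) < Γ e^τ}. -/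
/-!
Since `u = a - B/f` is time-independent, the claim is `0 ≥` the right-hand side. Using
`R + |∇f|² = f`, `√u ≤ √a` and `f < Γ e^τ`, every term is bounded by `1/f` or `1/f²` with
`τ`-independent coefficients: the right-hand side is at most
`((1 + C_n√a) B n / (2f) - δ) / f`, where `δ = B - 4C_n(1+ε)(sup f|Rm|) a - C₀√a > 0`.
This is negative as soon as `f` is large, which `f > γ e^τ ≥ γ e^{τ₀}` guarantees.
-/

open Real Filter

theorem laplacian_drift_terms_le {ν c s σ B f R w : ℝ} (hν : 0 ≤ ν) (hc : 0 ≤ c)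
    (hs : 0 ≤ s) (hsσ : s ≤ σ) (hB : 0 ≤ B) (hf : 0 < f) (hR : 0 ≤ R) (hw : 0 ≤ w)
    (hRw : R + w = f) :
    (1 + c * s) * (B * (ν / 2 - R) / f ^ 2 - 2 * B * w / f ^ 3) - B * w / f ^ 2
      ≤ (1 + c * σ) * B * ν / (2 * f ^ 2) - B / f := by
  have hgap : (1 + c * σ) * B * ν / (2 * f ^ 2) - B / f
      - ((1 + c * s) * (B * (ν / 2 - R) / f ^ 2 - 2 * B * w / f ^ 3) - B * w / f ^ 2)
      = (c * (σ - s) * B * ν * f / 2 + c * s * B * R * f + 2 * B * w * (1 + c * s))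
        / f ^ 3 := by
    subst hRw
    field_simp
    ring
  have hσs : 0 ≤ σ - s := sub_nonneg.mpr hsσ
  rw [← sub_nonneg, hgap]
  positivity

theorem mul_le_mul_div_of_mul_le {N u a S f : ℝ} (hN : 0 ≤ N) (hf : 0 < f) (ha : 0 ≤ a)
    (hua : u ≤ a) (hNf : N * f ≤ S) : N * u ≤ S * a / f := by
  rw [le_div_iff₀ hf]
  calc N * u * f = N * f * u := by ring
    _ ≤ N * f * a := mul_le_mul_of_nonneg_left hua (mul_nonneg hN hf.le)
    _ ≤ S * a := mul_le_mul_of_nonneg_right hNf ha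

theorem forcing_term_le {C₀ Γ τ f s σ : ℝ} (hC₀ : 0 ≤ C₀) (hΓ : 0 < Γ) (hf : 0 < f)
    (hs : 0 ≤ s) (hsσ : s ≤ σ) (hfΓ : f < Γ * exp τ) :
    C₀ / Γ * exp (-τ) * s ≤ C₀ * σ / f := by
  have hexp : exp (-τ) * f ≤ Γ := by
    rw [exp_neg, inv_mul_eq_div, div_le_iff₀ (exp_pos τ)]
    exact hfΓ.le
  rw [div_mul_eq_mul_div, div_mul_eq_mul_div, div_le_div_iff₀ hΓ hf]
  calc C₀ * exp (-τ) * s * f = C₀ * (exp (-τ) * f * s) := by ring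
    _ ≤ C₀ * (Γ * σ) := mul_le_mul_of_nonneg_left (mul_le_mul hexp hsσ hs hΓ.le) hC₀
    _ = C₀ * σ * Γ := by ring

theorem exists_forall_le_mul_exp {γ : ℝ} (hγ : 0 < γ) (F : ℝ) :
    ∃ τ₀ : ℝ, ∀ τ, τ₀ ≤ τ → F ≤ γ * exp τ :=
  ((tendsto_exp_atTop.const_mul_atTop hγ).eventually_ge_atTop F).exists_forall_of_atTop

/-- Here `w2 = |∇f|²` and `lapf = Δf`; since `u` depends on `x` only through `f`, the chain
rule gives `Δu = B Δf/f² - 2B|∇f|²/f³`, `∇_{∇f} u = B |∇f|²/f²` and `∂_τ u = 0`. -/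
theorem statement16 (M : Type*) (n : ℕ) (Cn ε γ Γ : ℝ)
    (hCn : 0 < Cn) (hε : ε ∈ Set.Ioo (0 : ℝ) 1) (hγ : 0 < γ) (hΓ : 0 < Γ)
    (f R w2 lapf normRm : M → ℝ) (SRm : ℝ) (hSRm0 : 0 ≤ SRm)
    (hR : ∀ x, 0 ≤ R x) (hfpos : ∀ x, 0 < f x)
    (hw2 : ∀ x, 0 ≤ w2 x ∧ w2 x ≤ f x)
    (hlap : ∀ x, lapf x = (n : ℝ) / 2 - R x)
    (hfdecomp : ∀ x, R x + w2 x = f x)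
    (hRm0 : ∀ x, 0 ≤ normRm x)
    -- `sup_M (f|Rm|) ≤ SRm`
    (hfRm : ∀ x, normRm x * f x ≤ SRm)
    (a B C₀ : ℝ) (ha : 0 < a) (hC₀ : 0 < C₀)
    (hB : 4 * Cn * (1 + ε) * SRm * a + C₀ * Real.sqrt a < B) :
    ∃ τ₀ : ℝ, ∀ (x : M) (τ : ℝ), τ₀ ≤ τ →
      γ * Real.exp τ < f x → f x < Γ * Real.exp τ →
      -- positivity of the supersolution
      0 < a - B / f x ∧
      -- `0 = ∂_τ u ≥ (1 + C_n√u)Δu - ∇_{∇f}u + 4C_n(1+ε)|Rm|u + (C₀/Γ)e^{-τ}√u`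
      (1 + Cn * Real.sqrt (a - B / f x)) *
          (B * lapf x / f x ^ 2 - 2 * B * w2 x / f x ^ 3)
        - B * w2 x / f x ^ 2
        + 4 * Cn * (1 + ε) * normRm x * (a - B / f x)
        + C₀ / Γ * Real.exp (-τ) * Real.sqrt (a - B / f x)
      ≤ 0 := by
  have hε0 : 0 < ε := hε.1
  have hB0 : 0 < B := lt_of_le_of_lt (by positivity) hB
  set δ := B - (4 * Cn * (1 + ε) * SRm * a + C₀ * √a) with hδ
  have hδ0 : 0 < δ := sub_pos.mpr hB
  obtain ⟨τ₀, hτ₀⟩ := exists_forall_le_mul_exp hγ (max (B / a) ((1 + Cn * √a) * B * n / (2 * δ)))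
  refine ⟨τ₀, fun x τ hτ hγf hfΓ => ?_⟩
  have hf : 0 < f x := hfpos x
  have hf_large := (hτ₀ τ hτ).trans_lt hγf
  have hu : 0 < a - B / f x := by
    rw [sub_pos, div_lt_iff₀ hf, ← div_lt_iff₀' ha]
    exact (le_max_left _ _).trans_lt hf_large
  have hua : a - B / f x ≤ a := sub_le_self a (by positivity)
  have hsqrt : √(a - B / f x) ≤ √a := sqrt_le_sqrt hua
  have hmain : (1 + Cn * √a) * B * n / 2 ≤ δ * f x := by
    rw [← div_le_iff₀' hδ0, div_div]
    exact (le_max_right _ _).trans hf_large.le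
  refine ⟨hu, ?_⟩
  rw [hlap x]
  calc _ ≤ ((1 + Cn * √a) * B * n / (2 * f x ^ 2) - B / f x)
        + 4 * Cn * (1 + ε) * (SRm * a / f x) + C₀ * √a / f x := by
        have hcurv := mul_le_mul_div_of_mul_le (hRm0 x) hf ha.le hua (hfRm x)
        gcongr ?_ + ?_ + ?_
        · exact laplacian_drift_terms_le (Nat.cast_nonneg n) hCn.le (sqrt_nonneg _) hsqrt
            hB0.le hf (hR x) (hw2 x).1 (hfdecomp x)
        · rw [mul_assoc]
          exact mul_le_mul_of_nonneg_left hcurv (by positivity)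
        · exact forcing_term_le hC₀.le hΓ hf (sqrt_nonneg _) hsqrt hfΓ
    _ = ((1 + Cn * √a) * B * n / 2 - δ * f x) / f x ^ 2 := by
        rw [hδ]
        field_simp
        ring
    _ ≤ 0 := div_nonpos_of_nonpos_of_nonneg (sub_nonpos.mpr hmain) (by positivity)
end
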